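/- Let A be resolvent positive on an AL space, B positive on D(A) with α(Au + Bu) = 0 on D(A)₊. Then for every λ > 0, u ∈ X₊ and N ∈ ℕ: λ‖R(λ,A) Σ_{n=0}^{N}(B R(λ,A))^n u‖ = ‖u‖ − ‖(B R(λ,A))^{N+1} u‖. -/

import Mathlib

/-!
Since `α` is linear and coincides with the norm on the positive cone, every norm in the claim can
be replaced by `α`. Applying `α` to `λ R f - A (R f) = f` and using `α (A + B) = 0` on the cone gives
`λ α (R f) = α f - α (K f)` for `f ≥ 0`. Taking `f = ∑_{n ≤ N} Kⁿ u` and using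
`(1 - K) ∑_{n ≤ N} Kⁿ = 1 - K^{N+1}`, the right-hand side telescopes to `α u - α (K^{N+1} u)`.
-/

theorem pow_apply_nonneg {𝕜 M : Type*} [Semiring 𝕜] [TopologicalSpace M] [AddCommMonoid M]
    [Module 𝕜 M] [LE M] {K : M →L[𝕜] M} (hK : ∀ f : M, 0 ≤ f → 0 ≤ K f) {u : M} (hu : 0 ≤ u) :
    ∀ n : ℕ, 0 ≤ (K ^ n) u
  | 0 => hu
  | n + 1 => by rw [pow_succ', mul_apply_eq_comp]; exact hK _ (pow_apply_nonneg hK hu n)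

theorem sum_pow_apply_sub_apply_sum {𝕜 M : Type*} [Ring 𝕜] [TopologicalSpace M] [AddCommGroup M]
    [IsTopologicalAddGroup M] [Module 𝕜 M] (K : M →L[𝕜] M) (u : M) (N : ℕ) :
    ∑ n ∈ Finset.range N, (K ^ n) u - K (∑ n ∈ Finset.range N, (K ^ n) u) = u - (K ^ N) u := by
  have h := congrArg (fun T : M →L[𝕜] M => T u) (mul_neg_geom_sum K N)
  simpa only [mul_apply_eq_comp, sub_apply, one_apply_eq_self, sum_apply, map_sum,
    Finset.sum_sub_distrib] using h

theorem mul_apply_resolvent_eq_of_conservative {X : Type*} [AddCommGroup X] [Module ℝ X] [LE X]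
    (α : X →ₗ[ℝ] ℝ) (p : Submodule ℝ X) (A B : p →ₗ[ℝ] X)
    (hcons : ∀ u : p, 0 ≤ (u : X) → α (A u + B u) = 0)
    (lam : ℝ) (R : X → X) (hRpos : ∀ f : X, 0 ≤ f → 0 ≤ R f) (hmem : ∀ f : X, R f ∈ p)
    (hright : ∀ f : X, lam • R f - A ⟨R f, hmem f⟩ = f) {f : X} (hf : 0 ≤ f) :
    lam * α (R f) = α f - α (B ⟨R f, hmem f⟩) := by
  have hA := congrArg α (hright f)
  have hAB := hcons ⟨R f, hmem f⟩ (hRpos f hf)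
  rw [map_sub, map_smul, smul_eq_mul] at hA
  rw [map_add] at hAB
  linarith

theorem stmt_12_general {X : Type*} [NormedAddCommGroup X] [Lattice X] [IsOrderedAddMonoid X] [NormedSpace ℝ X]
    (α : X →L[ℝ] ℝ) (hα : ∀ u : X, 0 ≤ u → α u = ‖u‖)
    (p : Submodule ℝ X) (A B : p →ₗ[ℝ] X)
    (hBpos : ∀ u : p, 0 ≤ (u : X) → 0 ≤ B u)
    (hcons : ∀ u : p, 0 ≤ (u : X) → α (A u + B u) = 0)
    (lam : ℝ)
    (R : X →L[ℝ] X) (hRpos : ∀ f : X, 0 ≤ f → 0 ≤ R f)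
    (hmem : ∀ f : X, R f ∈ p)
    (hright : ∀ f : X, lam • (R f) - A ⟨R f, hmem f⟩ = f)
    (K : X →L[ℝ] X) (hK : ∀ f : X, K f = B ⟨R f, hmem f⟩) :
    ∀ u : X, 0 ≤ u → ∀ N : ℕ,
      lam * ‖R (∑ n ∈ Finset.range (N + 1), (K ^ n) u)‖ = ‖u‖ - ‖(K ^ (N + 1)) u‖ := by
  intro u hu N
  have hKpos : ∀ f : X, 0 ≤ f → 0 ≤ K f := fun f hf => hK f ▸ hBpos _ (hRpos f hf)
  set S := ∑ n ∈ Finset.range (N + 1), (K ^ n) u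
  have hS : 0 ≤ S := Finset.sum_nonneg fun n _ => pow_apply_nonneg hKpos hu n
  calc lam * ‖R S‖ = lam * α (R S) := by rw [hα _ (hRpos S hS)]
    _ = α S - α (K S) := by
      rw [hK]
      exact mul_apply_resolvent_eq_of_conservative α.toLinearMap p A B hcons lam R hRpos hmem
        hright hS
    _ = α u - α ((K ^ (N + 1)) u) := by rw [← map_sub, sum_pow_apply_sub_apply_sum, map_sub]
    _ = ‖u‖ - ‖(K ^ (N + 1)) u‖ := by rw [hα u hu, hα _ (pow_apply_nonneg hKpos hu _)]

/-- In the conservative Kato setting, for every `λ > 0`, `u ≥ 0` and `N`: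
`λ‖R(λ,A) ∑_{n=0}^{N}(B R(λ,A))^n u‖ = ‖u‖ - ‖(B R(λ,A))^{N+1} u‖`. -/
theorem stmt_12 {X : Type*} [NormedAddCommGroup X] [Lattice X] [HasSolidNorm X] [IsOrderedAddMonoid X] [NormedSpace ℝ X] [CompleteSpace X]
    (hadd : ∀ u v : X, 0 ≤ u → 0 ≤ v → ‖u + v‖ = ‖u‖ + ‖v‖)
    (α : X →L[ℝ] ℝ) (hα : ∀ u : X, 0 ≤ u → α u = ‖u‖)
    (p : Submodule ℝ X) (A B : p →ₗ[ℝ] X)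
    (hBpos : ∀ u : p, 0 ≤ (u : X) → 0 ≤ B u)
    (hcons : ∀ u : p, 0 ≤ (u : X) → α (A u + B u) = 0)
    (lam : ℝ) (hlam : 0 < lam)
    (R : X →L[ℝ] X) (hRpos : ∀ f : X, 0 ≤ f → 0 ≤ R f)
    (hmem : ∀ f : X, R f ∈ p)
    (hleft : ∀ u : p, R (lam • (u : X) - A u) = u)
    (hright : ∀ f : X, lam • (R f) - A ⟨R f, hmem f⟩ = f)
    (K : X →L[ℝ] X) (hK : ∀ f : X, K f = B ⟨R f, hmem f⟩) :
    ∀ u : X, 0 ≤ u → ∀ N : ℕ,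
      lam * ‖R (∑ n ∈ Finset.range (N + 1), (K ^ n) u)‖ = ‖u‖ - ‖(K ^ (N + 1)) u‖ :=
  stmt_12_general α hα p A B hBpos hcons lam R hRpos hmem hright K hK
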